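/- Suppose for every γ > 0 there are only finitely many t ∈ ℤ₊ⁿ with δ(g_t Λ_y) ≤ e^{-γ(t₁+⋯+tₙ)}. Then y ∈ ℝⁿ is not very well multiplicatively approximable. -/

import Mathlib

open MeasureTheory

/-- `δ(Λ) = inf_{v ∈ Λ, v ≠ 0} ‖v‖_∞` (the sup-norm is the norm of the pi type). -/
noncomputable def latDelta {k : ℕ} (Lam : Set (Fin k → ℝ)) : ℝ :=
  ⨅ v : {v : Fin k → ℝ // v ∈ Lam ∧ v ≠ 0}, ‖v.1‖

/-- The lattice `Λ_y ⊂ ℝ^{n+1}` of vectors `(q·y + p, q₁, …, qₙ)`, `p ∈ ℤ`, `q ∈ ℤⁿ`. -/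
def lat {n : ℕ} (y : Fin n → ℝ) : Set (Fin (n + 1) → ℝ) :=
  {v | ∃ (p : ℤ) (q : Fin n → ℤ),
    v = Fin.cons ((∑ i, (q i : ℝ) * y i) + (p : ℝ)) (fun i => (q i : ℝ))}

/-- The action of `g_t = diag(e^t, e^{-t₁}, …, e^{-tₙ})` on `ℝ^{n+1}`, where `t = Σᵢ tᵢ`. -/
noncomputable def gAct {n : ℕ} (t : Fin n → ℝ) (v : Fin (n + 1) → ℝ) : Fin (n + 1) → ℝ :=
  Fin.cons (Real.exp (∑ i, t i) * v 0) (fun i => Real.exp (-t i) * v i.succ)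

/-- `y ∈ ℝⁿ` is very well multiplicatively approximable: for some `ε > 0` there are
infinitely many `q ∈ ℤⁿ` with `|q·y + p| · Π₊(q) ≤ Π₊(q)^{-ε}` for some `p ∈ ℤ`. -/
def VWMA {n : ℕ} (y : Fin n → ℝ) : Prop :=
  ∃ ε : ℝ, 0 < ε ∧
    {q : Fin n → ℤ | ∃ p : ℤ,
      |(∑ i, (q i : ℝ) * y i) + (p : ℝ)| * (∏ i, max |(q i : ℝ)| 1) ≤
        (∏ i, max |(q i : ℝ)| 1) ^ (-ε)}.Infinite

/-!
If `|q·y + p| ≤ Π₊(q)^{-1-ε}` with `L = log Π₊(q)` large, take `tᵢ = ⌈log max(|qᵢ|,1) + cL⌉`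
with `c = ε/(2(n+1))`. Then `g_t` contracts the coordinates `qᵢ` to size `≤ e^{-cL}` while
`Σ tᵢ ≤ (1 + ε/2)L + n`, so the first coordinate has size `≤ e^{n - εL/2}`; both are
`≤ e^{-γ Σ tᵢ}` for `γ = ε/(8(n+1))`. Since `|qᵢ| ≤ e^{tᵢ}`, each `t` comes from finitely
many `q`, so infinitely many solutions `q` would give infinitely many such `t`.
-/

section

open Real

variable {n : ℕ}

lemma latDelta_le_norm {k : ℕ} {Lam : Set (Fin k → ℝ)} {v : Fin k → ℝ}
    (hv : v ∈ Lam) (hv0 : v ≠ 0) : latDelta Lam ≤ ‖v‖ :=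
  ciInf_le ⟨0, by rintro _ ⟨w, rfl⟩; exact norm_nonneg _⟩
    (⟨v, hv, hv0⟩ : {v // v ∈ Lam ∧ v ≠ 0})

lemma latDelta_gAct_lat_le (y t : Fin n → ℝ) (p : ℤ) {q : Fin n → ℤ} (hq : q ≠ 0) {r : ℝ}
    (h_zero : exp (∑ i, t i) * |(∑ i, (q i : ℝ) * y i) + p| ≤ r)
    (h_succ : ∀ i, exp (-t i) * |(q i : ℝ)| ≤ r) :
    latDelta (gAct t '' lat y) ≤ r := by
  obtain ⟨i₀, hi₀⟩ := Function.ne_iff.mp hq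
  set v : Fin (n + 1) → ℝ := Fin.cons ((∑ i, (q i : ℝ) * y i) + p) (fun i => (q i : ℝ))
  have hv : v ∈ lat y := ⟨p, q, rfl⟩
  have hgv : gAct t v ≠ 0 := fun h => hi₀ (by simpa [gAct, v] using congrFun h i₀.succ)
  refine (latDelta_le_norm (Set.mem_image_of_mem (gAct t) hv) hgv).trans ?_
  have hr : 0 ≤ r := (by positivity : 0 ≤ exp (-t i₀) * |(q i₀ : ℝ)|).trans (h_succ i₀)
  refine (pi_norm_le_iff_of_nonneg hr).2 fun j => ?_
  induction j using Fin.cases with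
  | zero => simpa [gAct, v, abs_mul] using h_zero
  | succ i => simpa [gAct, v, abs_mul] using h_succ i

lemma finite_setOf_forall_abs_le (M : Fin n → ℝ) :
    {q : Fin n → ℤ | ∀ i, |(q i : ℝ)| ≤ M i}.Finite := by
  refine (Set.Finite.pi fun i => Set.finite_Icc ⌈-M i⌉ ⌊M i⌋).subset fun q hq i _ => ?_
  obtain ⟨hlo, hhi⟩ := abs_le.mp (hq i)
  exact ⟨Int.ceil_le.mpr (by linarith), Int.le_floor.mpr hhi⟩

noncomputable def multHeight (q : Fin n → ℤ) : ℝ := ∏ i, max |(q i : ℝ)| 1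

lemma one_le_multHeight (q : Fin n → ℤ) : 1 ≤ multHeight q :=
  Finset.one_le_prod fun _ _ => le_max_right _ _

lemma abs_le_multHeight (q : Fin n → ℤ) (i : Fin n) : |(q i : ℝ)| ≤ multHeight q :=
  Finset.le_prod_max_one (Finset.mem_univ i) fun j => |(q j : ℝ)|

lemma log_multHeight (q : Fin n → ℤ) :
    log (multHeight q) = ∑ i, log (max |(q i : ℝ)| 1) :=
  log_prod fun _ _ => (zero_lt_one.trans_le (le_max_right _ _)).ne'

lemma finite_setOf_log_multHeight_le (M : ℝ) :
    {q : Fin n → ℤ | log (multHeight q) ≤ M}.Finite :=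
  (finite_setOf_forall_abs_le fun _ => exp M).subset fun q hq i =>
    calc |(q i : ℝ)| ≤ multHeight q := abs_le_multHeight q i
      _ = exp (log (multHeight q)) := (exp_log (zero_lt_one.trans_le (one_le_multHeight q))).symm
      _ ≤ exp M := exp_le_exp.mpr hq

lemma le_exp_of_mul_le_rpow_neg {a x ε : ℝ} (hx : 0 < x) (h : a * x ≤ x ^ (-ε)) :
    a ≤ exp (-(1 + ε) * log x) := by
  rw [← le_div_iff₀ hx, rpow_def_of_pos hx] at h
  rw [neg_mul, one_add_mul, neg_add, exp_add, exp_neg (log x), exp_log hx]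
  simpa [div_eq_inv_mul, mul_comm] using h

noncomputable def approxTime (c : ℝ) (q : Fin n → ℤ) (i : Fin n) : ℕ :=
  ⌈log (max |(q i : ℝ)| 1) + c * log (multHeight q)⌉₊

lemma log_max_abs_one_add_le_approxTime (c : ℝ) (q : Fin n → ℤ) (i : Fin n) :
    log (max |(q i : ℝ)| 1) + c * log (multHeight q) ≤ approxTime c q i :=
  Nat.le_ceil _

lemma abs_le_exp_log_max_abs_one (x : ℝ) : |x| ≤ exp (log (max |x| 1)) := by
  rw [exp_log (zero_lt_one.trans_le (le_max_right _ _))]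
  exact le_max_left _ _

lemma exp_neg_approxTime_mul_abs_le (c : ℝ) (q : Fin n → ℤ) (i : Fin n) :
    exp (-(approxTime c q i : ℝ)) * |(q i : ℝ)| ≤ exp (-(c * log (multHeight q))) :=
  calc exp (-(approxTime c q i : ℝ)) * |(q i : ℝ)|
      ≤ exp (-(approxTime c q i : ℝ)) * exp (log (max |(q i : ℝ)| 1)) := by
        gcongr; exact abs_le_exp_log_max_abs_one _
    _ ≤ exp (-(c * log (multHeight q))) := by
        rw [← exp_add]
        exact exp_le_exp.mpr (by linarith [log_max_abs_one_add_le_approxTime c q i])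

lemma abs_le_exp_approxTime {c : ℝ} (hc : 0 ≤ c) (q : Fin n → ℤ) (i : Fin n) :
    |(q i : ℝ)| ≤ exp (approxTime c q i) :=
  (abs_le_exp_log_max_abs_one _).trans <| exp_le_exp.mpr <| by
    nlinarith [log_max_abs_one_add_le_approxTime c q i, log_nonneg (one_le_multHeight q)]

lemma sum_approxTime_le {c : ℝ} (hc : 0 ≤ c) (q : Fin n → ℤ) :
    ∑ i, (approxTime c q i : ℝ) ≤ (1 + n * c) * log (multHeight q) + n := by
  have hL := log_nonneg (one_le_multHeight q)
  calc ∑ i, (approxTime c q i : ℝ)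
      ≤ ∑ i, (log (max |(q i : ℝ)| 1) + c * log (multHeight q) + 1) :=
        Finset.sum_le_sum fun i _ => (Nat.ceil_lt_add_one <| add_nonneg
          (log_nonneg (le_max_right _ _)) (mul_nonneg hc hL)).le
    _ = (1 + n * c) * log (multHeight q) + n := by
        simp only [Finset.sum_add_distrib, ← log_multHeight, Finset.sum_const, Finset.card_univ,
          Fintype.card_fin, nsmul_eq_mul]
        ring

lemma latDelta_approxTime_le (y : Fin n → ℝ) {ε : ℝ} (hε : 0 < ε) (hε₁ : ε ≤ 1) {p : ℤ}
    {q : Fin n → ℤ} (hpq : |(∑ i, (q i : ℝ) * y i) + p| * multHeight q ≤ multHeight q ^ (-ε))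
    (hq : 4 * (n + 1) ≤ ε * log (multHeight q)) :
    latDelta (gAct (fun i => (approxTime (ε / (2 * (n + 1))) q i : ℝ)) '' lat y) ≤
      exp (-(ε / (8 * (n + 1))) * ∑ i, (approxTime (ε / (2 * (n + 1))) q i : ℝ)) := by
  set N : ℝ := n + 1
  set c := ε / (2 * N)
  set L := log (multHeight q)
  set T := ∑ i, (approxTime c q i : ℝ)
  have hL : 0 ≤ L := log_nonneg (one_le_multHeight q)
  have hq0 : q ≠ 0 := by
    rintro rfl
    simp [L, multHeight] at hq
    linarith [show (0 : ℝ) < N by positivity]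
  have hnN : (n : ℝ) ≤ N := by simp [N]
  have hT : T ≤ (1 + ε / 2) * L + n := by
    have hnc : n * c ≤ ε / 2 :=
      calc n * c = ε / 2 * (n / N) := by simp only [c]; field_simp
        _ ≤ ε / 2 := mul_le_of_le_one_right (by positivity) (div_le_one_of_le₀ hnN (by positivity))
    nlinarith [sum_approxTime_le (by positivity : 0 ≤ c) q]
  have hεL : ε * L ≤ L := mul_le_of_le_one_left hL hε₁
  -- every coordinate of `g_t (q·y + p, q)` is `≤ exp (-εL/(4N))`, and `γT ≤ εL/(4N)` as `T ≤ 2L`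
  have hγT : ε / (8 * N) * T ≤ ε * L / (4 * N) :=
    calc ε / (8 * N) * T ≤ ε / (8 * N) * (2 * L) := by gcongr; linarith
      _ = ε * L / (4 * N) := by field_simp; ring
  have hεLN : ε * L / (4 * N) ≤ ε * L / 4 :=
    div_le_div_of_nonneg_left (by positivity) (by norm_num) (by linarith)
  refine latDelta_gAct_lat_le y _ p hq0 ?_ fun i => ?_
  · calc exp T * |(∑ i, (q i : ℝ) * y i) + p| ≤ exp T * exp (-(1 + ε) * L) := by
          gcongr; exact le_exp_of_mul_le_rpow_neg (by linarith [one_le_multHeight q]) hpq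
      _ ≤ exp (-(ε / (8 * N)) * T) := by
          rw [← exp_add]
          exact exp_le_exp.mpr (by linarith)
  · refine (exp_neg_approxTime_mul_abs_le c q i).trans (exp_le_exp.mpr ?_)
    have : ε * L / (4 * N) ≤ c * L := by
      rw [div_mul_eq_mul_div, div_le_div_iff₀ (by positivity) (by positivity)]
      nlinarith [mul_nonneg hε.le hL]
    linarith

end

/-- if for every `γ > 0` only finitely many `t ∈ ℤ₊ⁿ` satisfy
`δ(g_t Λ_y) ≤ e^{-γ(t₁+⋯+tₙ)}`, then `y` is not VWMA. -/
theorem stmt13 {n : ℕ} (y : Fin n → ℝ)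
    (h : ∀ γ : ℝ, 0 < γ →
      {t : Fin n → ℕ |
        latDelta (gAct (fun i => (t i : ℝ)) '' lat y) ≤
          Real.exp (-γ * ∑ i, (t i : ℝ))}.Finite) :
    ¬ VWMA y := by
  rintro ⟨ε₀, hε₀, hS₀⟩
  set ε := min ε₀ 1
  have hε : 0 < ε := lt_min hε₀ one_pos
  set S := {q : Fin n → ℤ | ∃ p : ℤ,
    |(∑ i, (q i : ℝ) * y i) + p| * multHeight q ≤ multHeight q ^ (-ε)}
  have hS : S.Infinite := hS₀.mono <| by
    rintro q ⟨p, hp⟩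
    exact ⟨p, hp.trans <|
      Real.rpow_le_rpow_of_exponent_le (one_le_multHeight q) (neg_le_neg (min_le_left _ _))⟩
  -- a solution `q` with large `Π₊(q)` lies in the box `|qᵢ| ≤ e^{tᵢ}` of its own `t = approxTime`
  have hB := h (ε / (8 * (n + 1))) (by positivity)
  refine hS (((finite_setOf_log_multHeight_le (4 * (n + 1) / ε)).union <|
    hB.biUnion fun t _ => finite_setOf_forall_abs_le fun i => Real.exp (t i)).subset ?_)
  rintro q ⟨p, hp⟩
  by_cases hq : Real.log (multHeight q) ≤ 4 * (n + 1) / ε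
  · exact Or.inl hq
  · refine Or.inr (Set.mem_biUnion (latDelta_approxTime_le y hε (min_le_right _ _) hp ?_)
      (abs_le_exp_approxTime (by positivity) q))
    rw [not_le, div_lt_iff₀ hε] at hq
    linarith
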